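/- Let p be a prime and let α = (α₁, …, α_r) be a basis for a subgroup of a finite abelian p-group G, with ord(α_i) = p^{n_i}, m = max_i n_i, and m₀ = min_i n_i. Let β ∈ G with ord(β) ≤ p^m. Let h be the least integer in {0, 1, …, m} for which there exists an integer vector x with β^{p^h} = (α₁^{x₁} ⋯ α_r^{x_r})^{p^h}, let x be such a vector for this minimal h (taking x = 0 when h = m), and set γ = β · α^{−x}. If ord(γ) ≤ p^{m₀}, then the extended tuple (α₁, …, α_r, γ) is a basis for the subgroup ⟨α₁, …, α_r, γ⟩. -/

import Mathlib

/-!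
Put `γ = β α^{-x}`. From `γ^{p^h} = 1` we get `ord γ = p^k` with `k ≤ h`, and `k ≤ m₀` by
hypothesis; it suffices that `⟨γ⟩ ∩ ⟨α⟩ = 1`. Otherwise Bezout with `ord γ` puts some `γ^{p^j}`,
`j < k`, into `⟨α⟩`, say `γ^{p^j} = α^c`. Since `(α^c)^{p^{m₀ - j}} = 1` and every `ord αᵢ` is a
multiple of `p^{m₀}`, each `cᵢ` is divisible by `p^j`, so `γ^{p^j} = (α^y)^{p^j}` and
`β^{p^j} = (α^{y + x})^{p^j}`, contradicting the minimality of `h`.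
-/

/-- A tuple `α` of elements of a finite abelian group is a *basis* for a subgroup `H`
if it generates `H` and every element of `H` has a unique representation
`∏ i, α i ^ x i` with `0 ≤ x i < orderOf (α i)`. -/
def IsBasis {G : Type*} [CommGroup G] {ι : Type*} [Fintype ι]
    (α : ι → G) (H : Subgroup G) : Prop :=
  Subgroup.closure (Set.range α) = H ∧
    ∀ β ∈ H, ∃! x : ι → ℕ,
      (∀ i, x i < orderOf (α i)) ∧ ∏ i, α i ^ x i = β

open Subgroup

section Group

variable {G : Type*} [Group G] {H : Subgroup G} {g : G}

theorem Subgroup.pow_gcd_orderOf_mem {z : ℕ} (hz : g ^ z ∈ H) : g ^ z.gcd (orderOf g) ∈ H := by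
  have hbezout : g ^ z.gcd (orderOf g) = (g ^ z) ^ z.gcdA (orderOf g) := by
    rw [← zpow_natCast, Nat.gcd_eq_gcd_ab, zpow_add, zpow_mul, zpow_mul, zpow_natCast,
      zpow_natCast, pow_orderOf_eq_one, one_zpow, mul_one]
  rw [hbezout]
  exact zpow_mem hz _

theorem exists_pow_prime_pow_mem_of_not_disjoint {p k : ℕ} (hp : p.Prime) (hg : orderOf g = p ^ k)
    (hdisj : ¬ Disjoint H (zpowers g)) : ∃ j < k, g ^ p ^ j ∈ H := by
  obtain ⟨a, haH, hag, ha⟩ : ∃ a ∈ H, a ∈ zpowers g ∧ a ≠ 1 := by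
    simpa [Subgroup.disjoint_def] using hdisj
  have hfin : IsOfFinOrder g := orderOf_pos_iff.mp (hg ▸ pow_pos hp.pos k)
  obtain ⟨z, rfl⟩ := hfin.mem_powers_iff_mem_zpowers.mpr hag
  have hgcd := Subgroup.pow_gcd_orderOf_mem haH
  rw [hg] at hgcd
  obtain ⟨j, hjk, hj⟩ := (Nat.dvd_prime_pow hp).mp (Nat.gcd_dvd_right z (p ^ k))
  refine ⟨j, lt_of_le_of_ne hjk ?_, hj ▸ hgcd⟩
  rintro rfl
  exact ha (orderOf_dvd_iff_pow_eq_one.mp (hg ▸ hj ▸ Nat.gcd_dvd_left z (p ^ j)))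

end Group

theorem prod_pow_mem_closure_range {G : Type*} [CommGroup G] {ι : Type*} [Fintype ι]
    (α : ι → G) (u : ι → ℕ) : ∏ i, α i ^ u i ∈ closure (Set.range α) :=
  prod_mem fun i _ => pow_mem (subset_closure (Set.mem_range_self i)) _

namespace IsBasis

variable {G : Type*} [CommGroup G] {ι : Type*} [Fintype ι] {α : ι → G} {H : Subgroup G}

theorem orderOf_pos (hα : IsBasis α H) (i : ι) : 0 < orderOf (α i) := by
  obtain ⟨x, ⟨hx, -⟩, -⟩ := hα.2 1 (one_mem H)
  exact (Nat.zero_le _).trans_lt (hx i)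

theorem eq_of_prod_pow_eq (hα : IsBasis α H) {u v : ι → ℕ} (hu : ∀ i, u i < orderOf (α i))
    (hv : ∀ i, v i < orderOf (α i)) (huv : ∏ i, α i ^ u i = ∏ i, α i ^ v i) : u = v :=
  (hα.2 _ (hα.1 ▸ prod_pow_mem_closure_range α v)).unique ⟨hu, huv⟩ ⟨hv, rfl⟩

theorem orderOf_dvd_of_prod_pow_eq_one (hα : IsBasis α H) {c : ι → ℕ}
    (hc : ∏ i, α i ^ c i = 1) (i : ι) : orderOf (α i) ∣ c i := by
  have hmod : (fun i => c i % orderOf (α i)) = fun _ => 0 :=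
    hα.eq_of_prod_pow_eq (fun i => Nat.mod_lt _ (hα.orderOf_pos i)) hα.orderOf_pos
      (by simpa [pow_mod_orderOf] using hc)
  exact Nat.dvd_of_mod_eq_zero (congrFun hmod i)

theorem exists_pow_eq_of_pow_eq_one (hα : IsBasis α H) {g : G} (hg : g ∈ H) {N M : ℕ}
    (hgN : g ^ N = 1) (hdvd : ∀ i, N * M ∣ orderOf (α i)) :
    ∃ y : ι → ℤ, g = (∏ i, α i ^ y i) ^ M := by
  obtain ⟨c, ⟨-, rfl⟩, -⟩ := hα.2 g hg
  have hcN : ∏ i, α i ^ (c i * N) = 1 := by simpa [pow_mul, Finset.prod_pow] using hgN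
  have hM : ∀ i, M ∣ c i := fun i => by
    have hN : N ≠ 0 := by
      rintro rfl
      exact (hα.orderOf_pos i).ne' (Nat.eq_zero_of_zero_dvd (by simpa using hdvd i))
    refine Nat.dvd_of_mul_dvd_mul_right (Nat.pos_of_ne_zero hN) ?_
    rw [mul_comm M]
    exact (hdvd i).trans (hα.orderOf_dvd_of_prod_pow_eq_one hcN i)
  choose y hy using hM
  refine ⟨fun i => y i, ?_⟩
  simp [hy, ← Finset.prod_pow, ← pow_mul, mul_comm]

theorem snoc {r : ℕ} {α : Fin r → G} (hα : IsBasis α (closure (Set.range α))) {γ : G}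
    (hγ : IsOfFinOrder γ) (hdisj : Disjoint (closure (Set.range α)) (zpowers γ)) :
    IsBasis (Fin.snoc α γ) (closure (Set.range (Fin.snoc α γ))) := by
  have hprod (u : Fin (r + 1) → ℕ) : ∏ i, (Fin.snoc α γ : Fin (r + 1) → G) i ^ u i =
      (∏ i, α i ^ Fin.init u i) * γ ^ u (Fin.last r) := by
    simp [Fin.prod_univ_castSucc, Fin.init]
  have hbound (u : Fin (r + 1) → ℕ) :
      (∀ i, u i < orderOf ((Fin.snoc α γ : Fin (r + 1) → G) i)) ↔
      (∀ i, Fin.init u i < orderOf (α i)) ∧ u (Fin.last r) < orderOf γ := by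
    simp [Fin.forall_fin_succ', Fin.init]
  refine ⟨rfl, fun b hb => ?_⟩
  rw [Fin.range_snoc, Set.insert_eq, Subgroup.closure_union, ← zpowers_eq_closure, sup_comm,
    mem_sup] at hb
  obtain ⟨a, ha, c, hc, rfl⟩ := hb
  obtain ⟨s, rfl⟩ := hγ.mem_powers_iff_mem_zpowers.mpr hc
  obtain ⟨y, ⟨hy, rfl⟩, -⟩ := hα.2 a ha
  have hs : s % orderOf γ < orderOf γ := Nat.mod_lt _ hγ.orderOf_pos
  refine ⟨Fin.snoc y (s % orderOf γ), ?_, fun u ⟨hu, hu_prod⟩ => ?_⟩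
  · simp [hbound, hprod, Fin.init, hy, hs, pow_mod_orderOf]
  rw [hbound] at hu
  simp only [hprod] at hu_prod
  rw [← pow_mod_orderOf γ s] at hu_prod
  have hsplit := mul_injective_of_disjoint hdisj
    (a₁ := (⟨_, prod_pow_mem_closure_range α (Fin.init u)⟩,
      ⟨_, npow_mem_zpowers γ (u (Fin.last r))⟩))
    (a₂ := (⟨_, prod_pow_mem_closure_range α y⟩, ⟨_, npow_mem_zpowers γ (s % orderOf γ)⟩))
    hu_prod
  simp only [Prod.mk.injEq, Subtype.mk.injEq] at hsplit
  rw [← Fin.snoc_init_self u, hα.eq_of_prod_pow_eq hu.1 hy hsplit.1,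
    pow_injOn_Iio_orderOf hu.2 hs hsplit.2]

end IsBasis

theorem extended_tuple_isBasis_general {p : ℕ} (hp : p.Prime) {G : Type*} [CommGroup G]
    {r : ℕ} (α : Fin r → G)
    (hα : IsBasis α (Subgroup.closure (Set.range α)))
    (n : Fin r → ℕ) (hord : ∀ i, orderOf (α i) = p ^ n i)
    (m₀ : ℕ) (hm₀ : IsLeast (Set.range n) m₀)
    (β : G)
    (h : ℕ)
    (x : Fin r → ℤ)
    (hx : β ^ p ^ h = (∏ i, α i ^ x i) ^ p ^ h)
    (hmin : ∀ h' < h, ¬ ∃ y : Fin r → ℤ, β ^ p ^ h' = (∏ i, α i ^ y i) ^ p ^ h')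
    (hγ : orderOf (β * (∏ i, α i ^ x i)⁻¹) ≤ p ^ m₀) :
    IsBasis (Fin.snoc α (β * (∏ i, α i ^ x i)⁻¹))
      (Subgroup.closure (Set.range (Fin.snoc α (β * (∏ i, α i ^ x i)⁻¹)))) := by
  set γ := β * (∏ i, α i ^ x i)⁻¹
  have hγ_pow : γ ^ p ^ h = 1 := by rw [mul_pow, inv_pow, hx, mul_inv_cancel]
  obtain ⟨k, hkh, hk⟩ := (Nat.dvd_prime_pow hp).mp (orderOf_dvd_of_pow_eq_one hγ_pow)
  have hkm₀ : k ≤ m₀ := (Nat.pow_le_pow_iff_right hp.one_lt).mp (hk ▸ hγ)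
  refine hα.snoc (orderOf_pos_iff.mp (hk ▸ pow_pos hp.pos k)) (by_contra fun hdisj => ?_)
  obtain ⟨j, hjk, hj⟩ := exists_pow_prime_pow_mem_of_not_disjoint hp hk hdisj
  have hjm₀ : j ≤ m₀ := hjk.le.trans hkm₀
  obtain ⟨y, hy⟩ := hα.exists_pow_eq_of_pow_eq_one hj (N := p ^ (m₀ - j)) (M := p ^ j)
    (by
      rw [← pow_mul, ← pow_add, Nat.add_sub_of_le hjm₀, ← orderOf_dvd_iff_pow_eq_one, hk]
      exact pow_dvd_pow p hkm₀)
    (fun i => by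
      rw [← pow_add, Nat.sub_add_cancel hjm₀, hord]
      exact pow_dvd_pow p (hm₀.2 ⟨i, rfl⟩))
  refine hmin j (hjk.trans_le hkh) ⟨y + x, ?_⟩
  calc β ^ p ^ j = γ ^ p ^ j * (∏ i, α i ^ x i) ^ p ^ j := by
        rw [← mul_pow, inv_mul_cancel_right]
    _ = (∏ i, α i ^ (y + x) i) ^ p ^ j := by
      simp only [hy, Pi.add_apply, zpow_add, Finset.prod_mul_distrib, mul_pow]

/-- Lemma 5(ii) of the paper: with `h ≤ m` minimal such that
`β^{p^h} = (α^x)^{p^h}` for some integer vector `x` (taking `x = 0` when `h = m`),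
`ord β ≤ p^m`, and `γ = β ⬝ α^{-x}` of order at most `p^{m₀} = min orderOf (α i)`,
the extended tuple `(α₁, …, α_r, γ)` is a basis for the subgroup it generates. -/
theorem extended_tuple_isBasis {p : ℕ} (hp : p.Prime) {G : Type*} [CommGroup G]
    [Fintype G] (hG : IsPGroup p G) {r : ℕ} (α : Fin r → G)
    (hα : IsBasis α (Subgroup.closure (Set.range α)))
    (n : Fin r → ℕ) (hord : ∀ i, orderOf (α i) = p ^ n i)
    (m : ℕ) (hm : IsGreatest (Set.range n) m)
    (m₀ : ℕ) (hm₀ : IsLeast (Set.range n) m₀)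
    (β : G) (hβ : orderOf β ≤ p ^ m)
    (h : ℕ) (hhm : h ≤ m)
    (x : Fin r → ℤ)
    (hx : β ^ p ^ h = (∏ i, α i ^ x i) ^ p ^ h)
    (hmin : ∀ h' < h, ¬ ∃ y : Fin r → ℤ, β ^ p ^ h' = (∏ i, α i ^ y i) ^ p ^ h')
    (hx0 : h = m → x = 0)
    (hγ : orderOf (β * (∏ i, α i ^ x i)⁻¹) ≤ p ^ m₀) :
    IsBasis (Fin.snoc α (β * (∏ i, α i ^ x i)⁻¹))
      (Subgroup.closure (Set.range (Fin.snoc α (β * (∏ i, α i ^ x i)⁻¹)))) :=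
  extended_tuple_isBasis_general hp α hα n hord m₀ hm₀ β h x hx hmin hγ
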